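/- arXiv:1303.7379 — 5 statements merged into one kernel-verified Lean document; each statement's English description precedes it below -/
import Mathlib

section
/- For any state s in the unreduced product automaton reachable from an initial state, there is a multi-state 𝔰 reachable from the initial multi-state of the set-reduced system such that s ⊑ 𝔰 (same control part and the data part of s belongs to the data set of 𝔰). More generally, any finite path s₀ → s₁ → ... → sₙ in the unreduced system lifts to a path 𝔰₀ → 𝔰₁ → ... → 𝔰ₙ in the reduced system with sᵢ ⊑ 𝔰ᵢ for all i. -/
/-- A state `(t_c, t_d)` is subsumed by a multi-state `(s_c, X)`. -/
def Subsumed {C D : Type*} (t : C × D) (m : C × Set D) : Prop :=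
  t.1 = m.1 ∧ t.2 ∈ m.2

/-- One step of the set-reduced transition system induced by `tr`. -/
def RStep {C D : Type*} (tr : C × D → C × D → Prop)
    (m m' : C × Set D) : Prop :=
  m'.2 = {y | ∃ x ∈ m.2, tr (m.1, x) (m'.1, y)} ∧ m'.2.Nonempty

theorem path_lifts_to_reduced {C D : Type*}
    (tr : C × D → C × D → Prop)
    (n : ℕ) (s : ℕ → C × D)
    (hpath : ∀ i < n, tr (s i) (s (i + 1)))
    (𝔰₀ : C × Set D) (h0 : Subsumed (s 0) 𝔰₀) :
    ∃ ms : ℕ → C × Set D, ms 0 = 𝔰₀ ∧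
      (∀ i < n, RStep tr (ms i) (ms (i + 1))) ∧
      (∀ i ≤ n, Subsumed (s i) (ms i)) := by
  let ms : ℕ → C × Set D := fun i => Nat.rec 𝔰₀
    (fun i m => ((s (i + 1)).1, {y | ∃ x ∈ m.2, tr (m.1, x) ((s (i + 1)).1, y)})) i
  have hsub : ∀ i ≤ n, Subsumed (s i) (ms i) := by
    intro i
    induction i with
    | zero => intro _; exact h0
    | succ i ih =>
      intro hi
      have hi' : i < n := Nat.lt_of_succ_le hi
      have ⟨hc, hd⟩ := ih hi'.le
      refine ⟨rfl, ?_⟩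
      exact ⟨(s i).2, hd, by rw [← hc, Prod.mk.eta]; exact hpath i hi'⟩
  refine ⟨ms, rfl, ?_, hsub⟩
  intro i hi
  have ⟨hc, hd⟩ := hsub (i + 1) hi
  exact ⟨hc ▸ rfl, (s (i + 1)).2, hd⟩
end

section
/- Conversely, if 𝔰 → 𝔱 is a transition in the set-reduced system and t is a state with t ⊑ 𝔱, then there exists a state s with s ⊑ 𝔰 and s → t in the unreduced system. Consequently, every finite path 𝔰₀ → ... → 𝔰ₙ ending in a state t ⊑ 𝔰ₙ can be lifted backwards to a path s₀ → ... → sₙ = t in the unreduced system with sᵢ ⊑ 𝔰ᵢ. -/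
theorem reduced_path_lifts_backwards {C D : Type*}
    (tr : C × D → C × D → Prop) :
    (∀ (𝔰 𝔱 : C × Set D) (t : C × D), RStep tr 𝔰 𝔱 → Subsumed t 𝔱 →
      ∃ s : C × D, Subsumed s 𝔰 ∧ tr s t) ∧
    (∀ (n : ℕ) (ms : ℕ → C × Set D),
      (∀ i < n, RStep tr (ms i) (ms (i + 1))) →
      ∀ t : C × D, Subsumed t (ms n) →
        ∃ s : ℕ → C × D, s n = t ∧
          (∀ i < n, tr (s i) (s (i + 1))) ∧
          (∀ i ≤ n, Subsumed (s i) (ms i))) := by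
  have step : ∀ (𝔰 𝔱 : C × Set D) (t : C × D), RStep tr 𝔰 𝔱 → Subsumed t 𝔱 →
      ∃ s : C × D, Subsumed s 𝔰 ∧ tr s t := by
    intro 𝔰 𝔱 t hR hS
    obtain ⟨hEq, -⟩ := hR
    obtain ⟨htc, htd⟩ := hS
    rw [hEq] at htd
    obtain ⟨x, hx, htr⟩ := htd
    refine ⟨(𝔰.1, x), ⟨rfl, hx⟩, ?_⟩
    have : t = (𝔱.1, t.2) := by ext <;> simp [htc]
    rw [this]; exact htr
  refine ⟨step, ?_⟩
  intro n
  induction n with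
  | zero =>
    intro ms _ t hS
    exact ⟨fun _ => t, rfl, fun i h => absurd h (Nat.not_lt_zero i),
      fun i h => by simp [Nat.le_zero.mp h, hS]⟩
  | succ n ih =>
    intro ms hsteps t hS
    obtain ⟨s', hs'sub, hs'tr⟩ := step (ms n) (ms (n+1)) t (hsteps n (Nat.lt_succ_self n)) hS
    obtain ⟨p, hpn, hptr, hpsub⟩ := ih ms (fun i hi => hsteps i (hi.trans (Nat.lt_succ_self n))) s' hs'sub
    refine ⟨fun i => if i ≤ n then p i else t, by simp, ?_, ?_⟩
    · intro i hi
      rcases Nat.lt_succ_iff_lt_or_eq.mp hi with h | h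
      · have : i + 1 ≤ n := h
        simp only [this, h.le, if_pos]
        exact hptr i h
      · subst h
        simp [hpn, hs'tr]
    · intro i hi
      rcases Nat.le_succ_iff.mp hi with h | h
      · simp [h]; exact hpsub i h
      · subst_vars; simp [hS]
end

section
/- If the unreduced product automaton contains a reachable accepting cycle, then the set-reduced automaton contains a reachable accepting cycle, under the assumptions that (i) control and data parts are finite, (ii) acceptance depends only on the control part, and (iii) for each pair of control states (s_c, t_c), the induced data relation is a partial function (the program is data-deterministic for a fixed control transition). -/
theorem unreduced_accepting_cycle_implies_reduced {C D : Type*}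
    [Finite C] [Finite D]
    (tr : C × D → C × D → Prop)
    (acc : C → Prop)
    (hdet : ∀ (c c' : C) (x y y' : D),
      tr (c, x) (c', y) → tr (c, x) (c', y') → y = y')
    (c₀ : C) (I : Set D)
    (hcycle : ∃ x₀ ∈ I, ∃ f : C × D,
      Relation.ReflTransGen tr (c₀, x₀) f ∧ acc f.1 ∧
      Relation.TransGen tr f f) :
    ∃ 𝔣 : C × Set D,
      Relation.ReflTransGen (RStep tr) (c₀, I) 𝔣 ∧ acc 𝔣.1 ∧
      Relation.TransGen (RStep tr) 𝔣 𝔣 := by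
  obtain ⟨x₀, hx₀, f, hreach, hacc, hcyc⟩ := hcycle
  -- simulation lemma for reflexive-transitive reachability
  have simB : ∀ a b : C × D, Relation.ReflTransGen tr a b → ∀ X : Set D, a.2 ∈ X →
      ∃ Y, b.2 ∈ Y ∧ Relation.ReflTransGen (RStep tr) (a.1, X) (b.1, Y) := by
    intro a b h
    induction h with
    | refl => exact fun X hX => ⟨X, hX, .refl⟩
    | @tail b c hab hbc ih =>
      intro X hX
      obtain ⟨Y, hY, hR⟩ := ih X hX
      refine ⟨{y | ∃ x ∈ Y, tr (b.1, x) (c.1, y)}, ⟨b.2, hY, hbc⟩, ?_⟩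
      exact hR.tail ⟨rfl, ⟨c.2, b.2, hY, hbc⟩⟩
  -- simulation lemma for transitive reachability, as a function of the set
  have simA : ∀ a b : C × D, Relation.TransGen tr a b →
      ∃ g : Set D → Set D, ∀ X, a.2 ∈ X →
        b.2 ∈ g X ∧ Relation.TransGen (RStep tr) (a.1, X) (b.1, g X) := by
    intro a b h
    induction h with
    | @single b hab =>
      refine ⟨fun X => {y | ∃ x ∈ X, tr (a.1, x) (b.1, y)}, fun X hX => ?_⟩
      exact ⟨⟨a.2, hX, hab⟩, .single ⟨rfl, ⟨b.2, a.2, hX, hab⟩⟩⟩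
    | @tail b c hab hbc ih =>
      obtain ⟨g, hg⟩ := ih
      refine ⟨fun X => {y | ∃ x ∈ g X, tr (b.1, x) (c.1, y)}, fun X hX => ?_⟩
      obtain ⟨hb, hT⟩ := hg X hX
      exact ⟨⟨b.2, hb, hbc⟩, hT.tail ⟨rfl, ⟨c.2, b.2, hb, hbc⟩⟩⟩
  obtain ⟨Y, hfY, hRreach⟩ := simB _ _ hreach I hx₀
  obtain ⟨g, hg⟩ := simA _ _ hcyc
  have hiter : ∀ k (X : Set D), f.2 ∈ X → f.2 ∈ g^[k] X := by
    intro k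
    induction k with
    | zero => exact fun X hX => hX
    | succ k ih =>
      intro X hX
      rw [Function.iterate_succ_apply']
      exact (hg _ (ih X hX)).1
  have hRT : ∀ k (X : Set D), f.2 ∈ X →
      Relation.ReflTransGen (RStep tr) (f.1, X) (f.1, g^[k] X) := by
    intro k
    induction k with
    | zero => exact fun X _ => .refl
    | succ k ih =>
      intro X hX
      rw [Function.iterate_succ_apply']
      exact (ih X hX).trans (hg _ (hiter k X hX)).2.to_reflTransGen
  have hTG : ∀ k (X : Set D), f.2 ∈ X →
      Relation.TransGen (RStep tr) (f.1, X) (f.1, g^[k+1] X) := by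
    intro k X hX
    rw [Function.iterate_succ_apply]
    exact Relation.TransGen.trans_left (hg X hX).2 (hRT k (g X) (hg X hX).1)
  -- pigeonhole on the finite type of sets of data states
  obtain ⟨i, j, hne, heq⟩ :=
    Finite.exists_ne_map_eq_of_infinite (fun k : ℕ => g^[k] Y)
  wlog hij : i < j generalizing i j
  · exact this j i hne.symm heq.symm (hne.lt_or_gt.resolve_left hij)
  refine ⟨(f.1, g^[i] Y), hRreach.trans (hRT i Y hfY), hacc, ?_⟩
  have h1 : g^[j] Y = g^[(j - i - 1) + 1] (g^[i] Y) := by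
    rw [← Function.iterate_add_apply]
    congr 1
    omega
  have h2 := hTG (j - i - 1) (g^[i] Y) (hiter i Y hfY)
  rw [← h1, ← heq] at h2
  exact h2
end

section
/- If the set-reduced automaton contains a reachable accepting cycle, then the unreduced product automaton contains a reachable accepting cycle, under the assumptions that control and data parts are finite, acceptance depends only on the control part, and the data transformation along the reduced cycle is a bijection of the finite data domain. -/
theorem reduced_accepting_cycle_implies_unreduced {C D : Type*}
    [Finite C] [Finite D]
    (tr : C × D → C × D → Prop)
    (acc : C → Prop)
    (c₀ : C) (I : Set D) (hI : I.Nonempty)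
    (𝔣 : C × Set D)
    (hreach : Relation.ReflTransGen (RStep tr) (c₀, I) 𝔣)
    (hacc : acc 𝔣.1)
    (hcyc : Relation.TransGen (RStep tr) 𝔣 𝔣)
    -- the composite data effect of the reduced cycle is a bijection κ
    (κ : D → D) (hκ : Function.Bijective κ)
    (hκcyc : ∀ x ∈ 𝔣.2, κ x ∈ 𝔣.2 ∧
      Relation.TransGen tr (𝔣.1, x) (𝔣.1, κ x)) :
    ∃ x₀ ∈ I, ∃ f : C × D,
      Relation.ReflTransGen tr (c₀, x₀) f ∧ acc f.1 ∧
      Relation.TransGen tr f f := by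
  have hne : 𝔣.2.Nonempty := by
    cases hcyc with
    | single h => exact h.2
    | tail _ h => exact h.2
  have hreachD : ∀ m, Relation.ReflTransGen (RStep tr) (c₀, I) m →
      ∀ y ∈ m.2, ∃ x₀ ∈ I, Relation.ReflTransGen tr (c₀, x₀) (m.1, y) := by
    intro m hm
    induction hm with
    | refl => intro y hy; exact ⟨y, hy, .refl⟩
    | tail _ h ih =>
      intro y hy
      rw [h.1] at hy
      obtain ⟨x, hxmem, hxy⟩ := hy
      obtain ⟨x₀, hx₀, hr⟩ := ih x hxmem
      exact ⟨x₀, hx₀, hr.tail hxy⟩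
  obtain ⟨x, hx⟩ := hne
  have hiter : ∀ n, κ^[n] x ∈ 𝔣.2 ∧
      (0 < n → Relation.TransGen tr (𝔣.1, x) (𝔣.1, κ^[n] x)) := by
    intro n
    induction n with
    | zero => exact ⟨hx, fun h => absurd h (lt_irrefl 0)⟩
    | succ n ih =>
      obtain ⟨hmem, htr⟩ := ih
      obtain ⟨hmem', htr'⟩ := hκcyc _ hmem
      rw [Function.iterate_succ_apply']
      refine ⟨hmem', fun _ => ?_⟩
      rcases Nat.eq_zero_or_pos n with h0 | hpos
      · subst h0; simpa using htr'
      · exact (htr hpos).trans htr'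
  obtain ⟨a, b, hab, heq⟩ :=
    Finite.exists_ne_map_eq_of_infinite (fun n : ℕ => κ^[n] x)
  wlog hlt : a < b generalizing a b
  · exact this b a hab.symm heq.symm (by omega)
  have hsplit : κ^[a] (κ^[b - a] x) = κ^[a] x := by
    rw [← Function.iterate_add_apply]
    rw [show a + (b - a) = b by omega, heq]
  have hfix : κ^[b - a] x = x := (hκ.injective.iterate a) hsplit
  obtain ⟨x₀, hx₀, hr⟩ := hreachD 𝔣 hreach x hx
  refine ⟨x₀, hx₀, (𝔣.1, x), hr, hacc, ?_⟩
  have := (hiter (b - a)).2 (by omega)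
  rwa [hfix] at this
end

section
/- Subsumption-based state matching is unsound for cycle detection: there exists a transition system on multi-states (subsets of a finite domain) containing multi-states S, S', S'' with S' ⊆ S, S'' ⊆ S, S' ∩ S'' = ∅, a transition path from S' to S'', and no cycle through S in the original system, such that identifying S' with S (matching by subsumption) creates a cycle in the quotient system where none exists in the original. -/
lemma univ_ne_true : (Set.univ : Set Bool) ≠ {true} := by
  intro h
  have : false ∈ ({true} : Set Bool) := h ▸ Set.mem_univ false
  simp at this

lemma univ_ne_false : (Set.univ : Set Bool) ≠ {false} := by
  intro h
  have : true ∈ ({false} : Set Bool) := h ▸ Set.mem_univ true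
  simp at this

theorem subsumption_unsound_for_cycles :
    ∃ (D : Type) (_ : Fintype D) (E : Set D → Set D → Prop)
      (S S' S'' : Set D),
      S' ⊆ S ∧ S'' ⊆ S ∧ S' ∩ S'' = ∅ ∧
      -- a transition path from S' to S''
      Relation.TransGen E S' S'' ∧
      -- no cycle through S in the original system
      ¬ Relation.TransGen E S S ∧
      -- matching S' with S (redirecting edges into S' to S) creates a cycle
      Relation.TransGen
        (fun a b => (E a b ∧ b ≠ S') ∨ (E a S' ∧ b = S)) S S := by
  classical
  refine ⟨Bool, inferInstance,
    (fun a b => (a = Set.univ ∧ b = {true}) ∨ (a = {true} ∧ b = {false})),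
    Set.univ, {true}, {false}, ?_, ?_, ?_, ?_, ?_, ?_⟩
  · exact Set.subset_univ _
  · exact Set.subset_univ _
  · ext x; simp
  · exact Relation.TransGen.single (Or.inr ⟨rfl, rfl⟩)
  · intro h
    have key : ∀ x, Relation.TransGen
        (fun a b => (a = Set.univ ∧ b = {true}) ∨ (a = {true} ∧ b = {false}))
        Set.univ x → x = {true} ∨ x = {false} := by
      intro x hx
      induction hx with
      | single h => rcases h with ⟨_, rfl⟩ | ⟨_, rfl⟩ <;> simp
      | tail _ h ih =>
        rcases h with ⟨rfl, rfl⟩ | ⟨rfl, rfl⟩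
        · rcases ih with h | h
          · exact absurd h univ_ne_true
          · exact absurd h univ_ne_false
        · simp
    rcases key _ h with h | h
    · exact univ_ne_true h
    · exact univ_ne_false h
  · exact Relation.TransGen.single (Or.inr ⟨Or.inl ⟨rfl, rfl⟩, rfl⟩)
end
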